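/- arXiv:2510.19452 — 6 statements merged into one kernel-verified Lean document; each statement's English description precedes it below -/
import Mathlib

section
/- If x is a leaf (a vertex of degree 1) of a finite connected simple graph G with n(G) ≥ 3, then v_x(G) < vv(G). -/
open SimpleGraph

variable {V : Type*}

/-- A walk `p` is a shortest path between its endpoints. -/
def SimpleGraph.IsShortestPath (G : SimpleGraph V) {x y : V} (p : G.Walk x y) : Prop :=
  p.IsPath ∧ p.length = G.dist x y

/-- `S` is an `x`-visibility set: `x ∉ S` and for every `y ∈ S` there is a shortest
`x,y`-path meeting `S` only in `y`. -/
def SimpleGraph.IsXVisSet (G : SimpleGraph V) (x : V) (S : Finset V) : Prop :=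
  x ∉ S ∧ ∀ y ∈ S, ∃ p : G.Walk x y, G.IsShortestPath p ∧
    ∀ z ∈ p.support, z ∈ S → z = y

/-- The `x`-visibility number `v_x(G)`: the maximum cardinality of an `x`-visibility set. -/
noncomputable def SimpleGraph.vx (G : SimpleGraph V) (x : V) : ℕ :=
  sSup {n | ∃ S : Finset V, G.IsXVisSet x S ∧ S.card = n}

/-- The vertex visibility number `vv(G)`: the maximum of `v_x(G)` over all vertices. -/
noncomputable def SimpleGraph.vv (G : SimpleGraph V) [Fintype V] : ℕ :=
  Finset.univ.sup fun x => G.vx x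

/-- If x is a leaf (degree 1) of a finite connected simple graph G with n(G) ≥ 3,
then v_x(G) < vv(G). -/
theorem stmt_0 [Fintype V] (G : SimpleGraph V) [DecidableRel G.Adj]
    (hconn : G.Connected) (hn : 3 ≤ Fintype.card V)
    (x : V) (hx : G.degree x = 1) :
    G.vx x < G.vv := by
  classical
  -- unique neighbor u of x
  obtain ⟨u, hu⟩ := Finset.card_eq_one.mp hx
  have hadj : ∀ v, G.Adj x v ↔ v = u := by
    intro v
    rw [← SimpleGraph.mem_neighborFinset, hu, Finset.mem_singleton]
  have hxu : G.Adj x u := (hadj u).mpr rfl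
  have hnexu : x ≠ u := hxu.ne
  -- boundedness of the visibility sets
  have bdd : ∀ w : V, BddAbove {n | ∃ S : Finset V, G.IsXVisSet w S ∧ S.card = n} := by
    intro w
    refine ⟨Fintype.card V, ?_⟩
    rintro n ⟨S, -, rfl⟩
    exact (Finset.card_le_univ S).trans_eq Finset.card_univ
  have key : ∀ T : Finset V, G.IsXVisSet u T → T.card ≤ G.vx u := by
    intro T hT
    exact le_csSup (bdd u) ⟨T, hT, rfl⟩
  have hvv : G.vx u ≤ G.vv := Finset.le_sup (Finset.mem_univ u)
  -- the supremum is attained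
  have hmem : G.vx x ∈ {n | ∃ S : Finset V, G.IsXVisSet x S ∧ S.card = n} := by
    apply Nat.sSup_mem _ (bdd x)
    exact ⟨0, ∅, ⟨Finset.notMem_empty x, fun y hy => absurd hy (Finset.notMem_empty y)⟩, rfl⟩
  obtain ⟨S, hS, hcard⟩ := hmem
  -- peeling off the first edge of a shortest path from x
  have step : ∀ (y : V) (P : G.Walk x y), y ≠ x → G.IsShortestPath P →
      ∃ P' : G.Walk u y, G.IsShortestPath P' ∧ P.support = x :: P'.support := by
    intro y P hy hP
    cases P with
    | nil => exact absurd rfl hy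
    | @cons _ b _ h q =>
      have hb : u = b := ((hadj b).mp h).symm
      subst hb
      refine ⟨q, ⟨hP.1.of_cons, ?_⟩, SimpleGraph.Walk.support_cons h q⟩
      have hlen : q.length + 1 = G.dist x y := hP.2
      obtain ⟨Q, hQ⟩ := (hconn u y).exists_walk_length_eq_dist
      have h1 : G.dist x y ≤ G.dist u y + 1 := by
        have := SimpleGraph.dist_le (SimpleGraph.Walk.cons hxu Q)
        simpa [hQ] using this
      have h2 : G.dist u y ≤ q.length := SimpleGraph.dist_le q
      omega
  have dist_ux : G.dist u x = 1 := dist_eq_one_iff_adj.mpr hxu.symm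
  by_cases huS : u ∈ S
  · -- then S = {u}, so vx x = 1
    have hSu : S = {u} := by
      apply Finset.eq_singleton_iff_unique_mem.mpr
      refine ⟨huS, fun y hy => ?_⟩
      obtain ⟨P, hP, hmeet⟩ := hS.2 y hy
      have hyx : y ≠ x := fun h => hS.1 (h ▸ hy)
      obtain ⟨P', hP', hsupp⟩ := step y P hyx hP
      have : u ∈ P.support := by
        rw [hsupp]
        exact List.mem_cons_of_mem _ P'.start_mem_support
      exact (hmeet u this huS).symm
    have hvx1 : G.vx x = 1 := by rw [← hcard, hSu, Finset.card_singleton]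
    -- u has a neighbor w ≠ x
    have hw : ∃ w, G.Adj u w ∧ w ≠ x := by
      by_contra hcon
      push_neg at hcon
      have hclosed : ∀ {a b : V} (p : G.Walk a b), a = x ∨ a = u → b = x ∨ b = u := by
        intro a b p
        induction p with
        | nil => exact id
        | @cons a c b h q ih =>
          rintro (rfl | rfl)
          · exact ih (Or.inr ((hadj c).mp h))
          · exact ih (Or.inl (hcon c h))
      have hsub : (Finset.univ : Finset V) ⊆ {x, u} := by
        intro v _
        have := hclosed ((hconn u v).some) (Or.inr rfl)
        simpa [Finset.mem_insert] using this
      have := Finset.card_le_card hsub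
      rw [Finset.card_univ] at this
      have h2 : ({x, u} : Finset V).card ≤ 2 := Finset.card_insert_le _ _
      omega
    obtain ⟨w, huw, hwx⟩ := hw
    have hwu : w ≠ u := huw.ne'
    set T : Finset V := {x, w} with hT
    have hTvis : G.IsXVisSet u T := by
      constructor
      · simp [hT, hnexu.symm, hwu.symm]
      · intro y hy
        rw [hT, Finset.mem_insert, Finset.mem_singleton] at hy
        rcases hy with rfl | rfl
        · refine ⟨SimpleGraph.Walk.cons hxu.symm SimpleGraph.Walk.nil, ⟨?_, ?_⟩, ?_⟩
          · rw [SimpleGraph.Walk.cons_isPath_iff]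
            simp [hnexu.symm]
          · simpa using dist_ux.symm
          · intro z hz hzT
            simp only [SimpleGraph.Walk.support_cons, SimpleGraph.Walk.support_nil,
              List.mem_cons, List.mem_singleton] at hz
            rcases hz with rfl | hz
            · exfalso; revert hzT; simp [hT, hnexu.symm, hwu.symm]
            · simpa using hz
        · refine ⟨SimpleGraph.Walk.cons huw SimpleGraph.Walk.nil, ⟨?_, ?_⟩, ?_⟩
          · rw [SimpleGraph.Walk.cons_isPath_iff]
            simp [Ne.symm hwu]
          · simpa using (dist_eq_one_iff_adj.mpr huw).symm
          · intro z hz hzT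
            simp only [SimpleGraph.Walk.support_cons, SimpleGraph.Walk.support_nil,
              List.mem_cons, List.mem_singleton] at hz
            rcases hz with rfl | hz
            · exfalso; revert hzT; simp [hT, hnexu.symm, hwu.symm]
            · simpa using hz
    have hTcard : T.card = 2 := by
      rw [hT, Finset.card_insert_of_notMem (by simp [hwx.symm]), Finset.card_singleton]
    have := key T hTvis
    rw [hTcard] at this
    omega
  · -- u ∉ S : insert x S is a u-visibility set
    set T : Finset V := insert x S with hT
    have hTvis : G.IsXVisSet u T := by
      constructor
      · simp [hT, hnexu.symm, huS]
      · intro y hy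
        rw [hT, Finset.mem_insert] at hy
        rcases hy with rfl | hyS
        · refine ⟨SimpleGraph.Walk.cons hxu.symm SimpleGraph.Walk.nil, ⟨?_, ?_⟩, ?_⟩
          · rw [SimpleGraph.Walk.cons_isPath_iff]
            simp [hnexu.symm]
          · simpa using dist_ux.symm
          · intro z hz hzT
            simp only [SimpleGraph.Walk.support_cons, SimpleGraph.Walk.support_nil,
              List.mem_cons, List.mem_singleton] at hz
            rcases hz with rfl | hz
            · exfalso; revert hzT; simp [hT, hnexu.symm, huS]
            · simpa using hz
        · obtain ⟨P, hP, hmeet⟩ := hS.2 y hyS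
          have hyx : y ≠ x := fun h => hS.1 (h ▸ hyS)
          obtain ⟨P', hP', hsupp⟩ := step y P hyx hP
          refine ⟨P', hP', ?_⟩
          intro z hz hzT
          rw [hT, Finset.mem_insert] at hzT
          rcases hzT with rfl | hzS
          · exfalso
            have hnd : P.support.Nodup := hP.1.support_nodup
            rw [hsupp, List.nodup_cons] at hnd
            exact hnd.1 hz
          · exact hmeet z (by rw [hsupp]; exact List.mem_cons_of_mem _ hz) hzS
    have hTcard : T.card = S.card + 1 := by
      rw [hT, Finset.card_insert_of_notMem hS.1]
    have := key T hTvis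
    rw [hTcard, hcard] at this
    omega
end

section
/- For every positive integer n there exists a finite connected simple graph G such that ℓ(G) − vv(G) ≥ n, i.e., the difference between the maximum number of leaves of a spanning tree of G and the vertex visibility number of G can be arbitrarily large. -/
open SimpleGraph

variable {V : Type*}

/-- ℓ(G): the maximum number of leaves over all spanning trees of G. -/
noncomputable def SimpleGraph.maxSpanningTreeLeaves (G : SimpleGraph V) : ℕ :=
  sSup {k | ∃ T : SimpleGraph V, T ≤ G ∧ T.IsTree ∧
    {v : V | (T.neighborSet v).ncard = 1}.ncard = k}

/-!
Let `G` be the graph on `{0, …, 3M}` in which `i ∼ j` iff `|i - j| ∈ {2, 3}`.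

The caterpillar with spine `0, 3, …, 3M`, in which `3k + 1` hangs from `3k + 3` and `3k + 2` from
`3k`, is a spanning tree of `G` whose `2M` vertices not divisible by `3` are leaves, so `ℓ(G) ≥ 2M`.

Fix `x` and an `x`-visibility set `S`, and let `y = x + j ∈ S` with `j ≥ 2`. Steps move by at
most `3` and `d(x, y) ≤ ⌈j / 3⌉`, so the `k`-th vertex of a shortest `x,y`-path has offset in
`[3k - 2, 3k]`: the path climbs one level of three offsets per step. If `r_k` offsets of level `k`
are reachable in this way without meeting `S`, then at most `r_k + 1` offsets of level `k + 1` are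
reachable at all, and each of them is either in `S` or counted by `r_{k+1}`. Telescoping, `S` has
at most one vertex more than there are levels to the right of `x`; by the reflection `i ↦ 3M - i`
the same holds on the left, and together with `x ± 1` this gives `vv(G) ≤ M + 5`.
-/

namespace SimpleGraph

variable {W : Type*} {G : SimpleGraph V} {G' : SimpleGraph W}

theorem Iso.dist_apply_le (φ : G ≃g G') (u v : V) : G'.dist (φ u) (φ v) ≤ G.dist u v := by
  by_cases hr : G.Reachable u v
  · obtain ⟨p, hp⟩ := hr.exists_walk_length_eq_dist
    simpa [hp] using SimpleGraph.dist_le (p.map φ.toHom)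
  · rw [dist_eq_zero_of_not_reachable hr, dist_eq_zero_of_not_reachable]
    exact fun h => hr (by simpa using h.map φ.symm.toHom)

theorem Iso.dist_apply (φ : G ≃g G') (u v : V) : G'.dist (φ u) (φ v) = G.dist u v :=
  (φ.dist_apply_le u v).antisymm (by simpa using φ.symm.dist_apply_le (φ u) (φ v))

theorem IsXVisSet.subset {x : V} {S S' : Finset V} (hS : G.IsXVisSet x S) (h : S' ⊆ S) :
    G.IsXVisSet x S' :=
  ⟨fun hx => hS.1 (h hx), fun y hy => (hS.2 y (h hy)).imp fun _ ⟨hp, hpS⟩ =>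
    ⟨hp, fun z hz hzS => hpS z hz (h hzS)⟩⟩

theorem IsXVisSet.map (φ : G ≃g G') {x : V} {S : Finset V} (hS : G.IsXVisSet x S) :
    G'.IsXVisSet (φ x) (S.map φ.toEquiv.toEmbedding) := by
  have hmem (z : V) : φ z ∈ S.map φ.toEquiv.toEmbedding ↔ z ∈ S := Finset.mem_map' _
  refine ⟨(hmem x).not.mpr hS.1, ?_⟩
  intro y' hy'
  obtain ⟨y, hy, rfl⟩ := Finset.mem_map.mp hy'
  obtain ⟨p, ⟨hpath, hlen⟩, hpS⟩ := hS.2 y hy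
  refine ⟨p.map φ.toHom,
    ⟨hpath.map (f := φ.toHom) φ.injective, by simpa [φ.dist_apply] using hlen⟩, ?_⟩
  simp only [Walk.support_map, List.mem_map, forall_exists_index, and_imp]
  rintro _ z hz rfl hzS
  exact congrArg φ (hpS z hz ((hmem z).mp hzS))

theorem vx_le {x : V} {b : ℕ} (h : ∀ S, G.IsXVisSet x S → S.card ≤ b) : G.vx x ≤ b :=
  csSup_le' <| by rintro _ ⟨S, hS, rfl⟩; exact h S hS

theorem vv_le [Fintype V] {b : ℕ} (h : ∀ x S, G.IsXVisSet x S → S.card ≤ b) : G.vv ≤ b :=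
  Finset.sup_le fun x _ => vx_le (h x)

theorem leaves_le_maxSpanningTreeLeaves [Finite V] {T : SimpleGraph V} (hTG : T ≤ G)
    (hT : T.IsTree) : {v | (T.neighborSet v).ncard = 1}.ncard ≤ G.maxSpanningTreeLeaves :=
  le_csSup ⟨Nat.card V, by rintro _ ⟨T, -, -, rfl⟩; exact Set.ncard_le_card _⟩
    ⟨T, hTG, hT, rfl⟩

def parentGraph (f : V → V) (r : V) : SimpleGraph V :=
  fromRel fun v w => v ≠ r ∧ w = f v

variable {f : V → V} {r : V} {μ : V → ℕ}

theorem parentGraph_adj (hμ : ∀ v, v ≠ r → μ (f v) < μ v) {v w : V} :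
    (parentGraph f r).Adj v w ↔ (v ≠ r ∧ w = f v) ∨ (w ≠ r ∧ v = f w) := by
  have hne (u : V) (hu : u ≠ r) : u ≠ f u := fun h => (hμ u hu).ne (by rw [← h])
  rw [parentGraph, fromRel_adj, and_iff_right_iff_imp]
  rintro (⟨hv, rfl⟩ | ⟨hw, rfl⟩)
  exacts [hne v hv, (hne w hw).symm]

theorem parentGraph_reachable_root (hμ : ∀ v, v ≠ r → μ (f v) < μ v) (v : V) :
    (parentGraph f r).Reachable v r := by
  induction h : μ v using Nat.strong_induction_on generalizing v with
  | _ m ih =>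
    by_cases hv : v = r
    · exact hv ▸ Reachable.refl v
    · have hadj : (parentGraph f r).Adj v (f v) := (parentGraph_adj hμ).mpr (Or.inl ⟨hv, rfl⟩)
      exact hadj.reachable.trans (ih _ (h ▸ hμ v hv) _ rfl)

theorem parentGraph_connected (hμ : ∀ v, v ≠ r → μ (f v) < μ v) :
    (parentGraph f r).Connected :=
  (connected_iff _).mpr ⟨fun u v => (parentGraph_reachable_root hμ u).trans
    (parentGraph_reachable_root hμ v).symm, ⟨r⟩⟩

theorem parentGraph_edgeSet (hμ : ∀ v, v ≠ r → μ (f v) < μ v) :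
    (parentGraph f r).edgeSet = Set.range fun v : {v // v ≠ r} => s(v.1, f v) := by
  ext e
  induction e using Sym2.ind with
  | _ v w =>
    simp only [mem_edgeSet, parentGraph_adj hμ, Set.mem_range, Subtype.exists, Sym2.eq_iff]
    constructor
    · rintro (⟨hv, rfl⟩ | ⟨hw, rfl⟩)
      exacts [⟨v, hv, Or.inl ⟨rfl, rfl⟩⟩, ⟨w, hw, Or.inr ⟨rfl, rfl⟩⟩]
    · rintro ⟨a, ha, ⟨rfl, rfl⟩ | ⟨rfl, rfl⟩⟩
      exacts [Or.inl ⟨ha, rfl⟩, Or.inr ⟨ha, rfl⟩]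

theorem parentGraph_isTree [Finite V] (hμ : ∀ v, v ≠ r → μ (f v) < μ v) :
    (parentGraph f r).IsTree := by
  classical
  refine isTree_iff_connected_and_card.mpr ⟨parentGraph_connected hμ, ?_⟩
  have hinj : Function.Injective fun v : {v // v ≠ r} => s(v.1, f v) := by
    rintro ⟨v, hv⟩ ⟨w, hw⟩ h
    simp only [Sym2.eq_iff, Subtype.mk.injEq] at h ⊢
    rcases h with ⟨h, -⟩ | ⟨rfl, h⟩
    · exact h
    · have h1 := hμ _ hv
      rw [h] at h1
      exact absurd (hμ _ hw) h1.asymm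
  rw [parentGraph_edgeSet hμ, Nat.card_range_of_injective hinj, ← Finite.card_option,
    Nat.card_congr (Equiv.optionSubtypeNe r)]

theorem parentGraph_neighborSet (hμ : ∀ v, v ≠ r → μ (f v) < μ v) {v : V} (hv : v ≠ r)
    (hleaf : ∀ w, w ≠ r → f w ≠ v) : (parentGraph f r).neighborSet v = {f v} := by
  ext w
  rw [mem_neighborSet, parentGraph_adj hμ, Set.mem_singleton_iff]
  constructor
  · rintro (⟨-, rfl⟩ | ⟨hw, rfl⟩)
    exacts [rfl, absurd rfl (hleaf w hw)]
  · exact fun h => Or.inl ⟨hv, h⟩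

end SimpleGraph

open SimpleGraph Finset

theorem card_biUnion_inter_Icc_le (A : Finset ℕ) (k : ℕ) :
    #((A.biUnion fun q => {q + 2, q + 3}) ∩ Icc (3 * k + 1) (3 * k + 3)) ≤ #A + 1 := by
  set B := (A.biUnion fun q => {q + 2, q + 3}) ∩ Icc (3 * k + 1) (3 * k + 3)
  have h2 : #B ≤ #A * 2 :=
    (card_le_card inter_subset_left).trans (card_biUnion_le_card_mul _ _ _ fun _ _ => card_le_two)
  have h3 : #B ≤ 3 :=
    (card_le_card inter_subset_right).trans (by simp)
  omega

/-- The offsets `o ∈ [3k - 2, 3k]` reachable from `0` in `k` steps of `+2` or `+3` whose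
offsets before the last all avoid `T`. -/
def reachOffsets (T : Finset ℕ) : ℕ → Finset ℕ
  | 0 => {0}
  | k + 1 =>
    ((reachOffsets T k \ T).biUnion fun q => {q + 2, q + 3}) ∩ Icc (3 * k + 1) (3 * k + 3)

namespace reachOffsets

variable {T : Finset ℕ}

theorem le_three_mul {k q : ℕ} (hq : q ∈ reachOffsets T k) : q ≤ 3 * k := by
  cases k with
  | zero => simp_all [reachOffsets]
  | succ k => simp only [reachOffsets, mem_inter, mem_Icc] at hq; omega

theorem sum_card_inter_add_card_sdiff_le (L : ℕ) :
    ∑ k ∈ range L, #(reachOffsets T (k + 1) ∩ T) + #(reachOffsets T L \ T) ≤ L + 1 := by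
  induction L with
  | zero => simpa [reachOffsets] using card_le_one.mpr (by simp_all)
  | succ L ih =>
    have hsplit := card_inter_add_card_sdiff (reachOffsets T (L + 1)) T
    have hstep : #(reachOffsets T (L + 1)) ≤ #(reachOffsets T L \ T) + 1 :=
      card_biUnion_inter_Icc_le _ L
    rw [sum_range_succ]
    omega

end reachOffsets

def twoThreeGraph (N : ℕ) : SimpleGraph (Fin N) :=
  SimpleGraph.fromRel fun u v => (v : ℕ) = u + 2 ∨ (v : ℕ) = u + 3

namespace twoThreeGraph

variable {N : ℕ}

theorem adj {u v : Fin N} : (twoThreeGraph N).Adj u v ↔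
    (v : ℕ) = u + 2 ∨ (v : ℕ) = u + 3 ∨ (u : ℕ) = v + 2 ∨ (u : ℕ) = v + 3 := by
  simp only [twoThreeGraph, fromRel_adj, ne_eq, Fin.ext_iff]
  omega

def revIso : twoThreeGraph N ≃g twoThreeGraph N where
  toEquiv := Fin.revPerm
  map_rel_iff' := by
    intro u v
    simp only [Fin.revPerm_apply, adj, Fin.val_rev]
    omega

theorem le_add_three_mul_length {a b : Fin N} (p : (twoThreeGraph N).Walk a b) :
    (b : ℕ) ≤ a + 3 * p.length := by
  induction p with
  | nil => simp
  | cons h _ ih =>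
    rw [Walk.length_cons]
    have := adj.mp h
    omega

theorem three_mul_dist_le {a b : Fin N} {j : ℕ} (hab : (b : ℕ) = a + j) (hj : 2 ≤ j) :
    3 * (twoThreeGraph N).dist a b ≤ j + 2 := by
  induction j using Nat.strong_induction_on generalizing a with
  | _ j ih =>
    by_cases hj3 : j ≤ 3
    · have h : (twoThreeGraph N).Adj a b := adj.mpr (by omega)
      rw [dist_eq_one_iff_adj.mpr h]
      omega
    · have step (s : ℕ) (hs : s = 2 ∨ s = 3) (hsj : s + 2 ≤ j) :
          3 * (twoThreeGraph N).dist a b ≤ 3 + (j - s + 2) := by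
        let c : Fin N := ⟨a + s, by omega⟩
        have hac : (twoThreeGraph N).Adj a c := adj.mpr (by simp only [c]; omega)
        have h1 := hac.reachable.dist_triangle_left b
        have h2 := ih (j - s) (by omega) (a := c) (by simp only [c]; omega) (by omega)
        rw [dist_eq_one_iff_adj.mpr hac] at h1
        omega
      obtain rfl | h5 : j = 4 ∨ 5 ≤ j := by omega
      · have := step 2 (by simp) le_rfl
        omega
      · have := step 3 (by simp) (by omega)
        omega

theorem mem_reachOffsets_of_walk {x y : Fin N} {j : ℕ} (hy : (y : ℕ) = x + j)
    {S : Finset (Fin N)} {T : Finset ℕ}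
    (hTS : ∀ (z : Fin N) (o : ℕ), (z : ℕ) = x + o → o ∈ T → z ∈ S)
    {v : Fin N} (p : (twoThreeGraph N).Walk v y) (hpS : ∀ z ∈ p.support, z ∈ S → z = y)
    {i o : ℕ} (hv : (v : ℕ) = x + o) (ho : o ∈ reachOffsets T i)
    (hlen : 3 * (i + p.length) ≤ j + 2) :
    j ∈ reachOffsets T (i + p.length) := by
  induction p generalizing i o with
  | nil => simpa [show o = j by omega] using ho
  | @cons v w y h q ih =>
    have hoi := reachOffsets.le_three_mul ho
    have hqy := le_add_three_mul_length q
    rw [Walk.length_cons] at hlen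
    have hvw := adj.mp h
    have hoT : o ∉ T := fun hoT =>
      absurd (hpS v (Walk.start_mem_support _) (hTS v o hv hoT)) (by rw [Fin.ext_iff]; omega)
    -- `q` climbs at most `3` per step, so `w` already lies on level `i + 1`
    have hw : (w : ℕ) - x ∈ reachOffsets T (i + 1) := by
      simp only [reachOffsets, mem_inter, mem_biUnion, mem_sdiff, mem_insert, mem_singleton,
        mem_Icc]
      exact ⟨⟨o, ⟨ho, hoT⟩, by omega⟩, by omega⟩
    have := ih hy (fun z hz => hpS z (by simp [hz])) (by omega) hw (by omega)
    rwa [Walk.length_cons, ← add_assoc, add_right_comm]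

theorem card_le_of_isXVisSet_of_add_two_le {x : Fin N} {S : Finset (Fin N)}
    (hS : (twoThreeGraph N).IsXVisSet x S) (hright : ∀ y ∈ S, (x : ℕ) + 2 ≤ y) :
    #S ≤ (N + 1 - x) / 3 + 1 := by
  set L := (N + 1 - x) / 3
  set T := S.image fun y : Fin N => (y : ℕ) - x
  have hcard : #T = #S := card_image_of_injOn fun a ha b hb hab => by
    have := hright a ha; have := hright b hb
    exact Fin.ext (by omega)
  have hTS (z : Fin N) (o : ℕ) (hz : (z : ℕ) = x + o) (ho : o ∈ T) : z ∈ S := by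
    obtain ⟨y, hy, rfl⟩ := mem_image.mp ho
    convert hy
    have := hright y hy
    exact Fin.ext (by omega)
  have hsub : T ⊆ (range L).biUnion fun k => reachOffsets T (k + 1) ∩ T := by
    intro j hj
    obtain ⟨y, hy, rfl⟩ := mem_image.mp hj
    have hxy := hright y hy
    obtain ⟨p, ⟨-, hlen⟩, hpS⟩ := hS.2 y hy
    have hdist := three_mul_dist_le (a := x) (b := y) (j := y - x) (by omega) (by omega)
    have hmem := mem_reachOffsets_of_walk (j := y - x) (by omega) hTS p hpS (i := 0) (o := 0)
      rfl (by simp [reachOffsets]) (by omega)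
    rw [zero_add] at hmem
    have hpos : p.length ≠ 0 := fun h => by
      rw [h] at hmem
      simp only [reachOffsets, mem_singleton] at hmem
      omega
    refine mem_biUnion.mpr ⟨p.length - 1, mem_range.mpr (by omega), ?_⟩
    rw [Nat.sub_add_cancel (Nat.pos_of_ne_zero hpos)]
    exact mem_inter.mpr ⟨hmem, hj⟩
  calc #S = #T := hcard.symm
    _ ≤ ∑ k ∈ range L, #(reachOffsets T (k + 1) ∩ T) :=
      (card_le_card hsub).trans card_biUnion_le
    _ ≤ L + 1 := le_self_add.trans (reachOffsets.sum_card_inter_add_card_sdiff_le L)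

theorem card_le_of_isXVisSet {x : Fin N} {S : Finset (Fin N)}
    (hS : (twoThreeGraph N).IsXVisSet x S) : #S ≤ N / 3 + 5 := by
  set right := S.filter fun y : Fin N => (x : ℕ) + 2 ≤ y
  set left := S.filter fun y : Fin N => (y : ℕ) + 2 ≤ x
  set near := S.filter fun y : Fin N => ¬(x : ℕ) + 2 ≤ y ∧ ¬(y : ℕ) + 2 ≤ x
  have hright : #right ≤ (N + 1 - x) / 3 + 1 :=
    card_le_of_isXVisSet_of_add_two_le (hS.subset (filter_subset _ S))
      fun y hy => (mem_filter.mp hy).2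
  have hleft : #left ≤ (x + 2) / 3 + 1 := by
    have hSl : (twoThreeGraph N).IsXVisSet x left := hS.subset (filter_subset _ S)
    have h := card_le_of_isXVisSet_of_add_two_le (hSl.map revIso) <| by
      simp only [mem_map, forall_exists_index, and_imp]
      rintro _ y hy rfl
      have := (mem_filter.mp hy).2
      simp only [revIso, RelIso.coe_fn_mk, Equiv.coe_toEmbedding, Fin.revPerm_apply, Fin.val_rev]
      omega
    simp only [card_map, revIso, RelIso.coe_fn_mk, Fin.revPerm_apply, Fin.val_rev] at h
    omega
  have hnear : #near ≤ 2 := by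
    have hsub : near.map Fin.valEmbedding ⊆ {(x : ℕ) - 1, (x : ℕ) + 1} := by
      simp only [near, subset_iff, mem_map, mem_filter, Fin.valEmbedding_apply, mem_insert,
        mem_singleton, forall_exists_index, and_imp]
      rintro _ y hy h1 h2 rfl
      have hyx : y ≠ x := fun h => hS.1 (h ▸ hy)
      rw [ne_eq, Fin.ext_iff] at hyx
      omega
    simpa using (card_le_card hsub).trans card_le_two
  have hcover : S ⊆ right ∪ left ∪ near := by
    intro y hy
    simp only [right, left, near, mem_union, mem_filter, hy, true_and]
    omega
  have hx := x.isLt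
  have := (card_le_card hcover).trans
    ((card_union_le _ _).trans (Nat.add_le_add_right (card_union_le _ _) _))
  omega

variable (M : ℕ)

def caterpillarParent (v : Fin (3 * M + 1)) : Fin (3 * M + 1) :=
  ⟨if (v : ℕ) % 3 = 1 then v + 2 else if (v : ℕ) % 3 = 2 then v - 2 else v - 3, by
    split_ifs <;> omega⟩

def caterpillarHeight (v : Fin (3 * M + 1)) : ℕ :=
  v + if (v : ℕ) % 3 = 1 then 3 else 0

def caterpillar : SimpleGraph (Fin (3 * M + 1)) := parentGraph (caterpillarParent M) 0

variable {M}

theorem caterpillarParent_height_lt (v : Fin (3 * M + 1)) (hv : v ≠ 0) :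
    caterpillarHeight M (caterpillarParent M v) < caterpillarHeight M v := by
  rw [ne_eq, Fin.ext_iff] at hv
  simp only [caterpillarHeight, caterpillarParent, Fin.val_zero] at hv ⊢
  split_ifs <;> omega

theorem caterpillar_adj {u v : Fin (3 * M + 1)} : (caterpillar M).Adj u v ↔
    (u ≠ 0 ∧ v = caterpillarParent M u) ∨ (v ≠ 0 ∧ u = caterpillarParent M v) :=
  parentGraph_adj caterpillarParent_height_lt

theorem caterpillar_isTree : (caterpillar M).IsTree :=
  parentGraph_isTree caterpillarParent_height_lt

theorem caterpillar_le : caterpillar M ≤ twoThreeGraph (3 * M + 1) := fun u v h => by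
  rw [caterpillar_adj] at h
  rw [adj]
  rcases h with ⟨hu, rfl⟩ | ⟨hv, rfl⟩ <;>
  · rw [ne_eq, Fin.ext_iff] at *
    simp only [caterpillarParent, Fin.val_zero] at *
    split_ifs <;> omega

theorem two_mul_le_card_leaves_caterpillar :
    2 * M ≤ {v | ((caterpillar M).neighborSet v).ncard = 1}.ncard := by
  have hleaf (v : Fin (3 * M + 1)) (hv : (v : ℕ) % 3 ≠ 0) :
      ((caterpillar M).neighborSet v).ncard = 1 := by
    rw [caterpillar, parentGraph_neighborSet caterpillarParent_height_lt,
      Set.ncard_singleton]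
    · rintro rfl
      simp at hv
    · intro w hw h
      rw [ne_eq, Fin.ext_iff] at hw
      rw [Fin.ext_iff] at h
      simp only [caterpillarParent, Fin.val_zero] at hw h
      split_ifs at h <;> omega
  let g : Fin (2 * M) → Fin (3 * M + 1) := fun i => ⟨3 * (i / 2) + 1 + i % 2, by omega⟩
  calc 2 * M = (Set.univ : Set (Fin (2 * M))).ncard := by simp
    _ ≤ _ := Set.ncard_le_ncard_of_injOn g (fun i _ => hleaf _ (by simp only [g]; omega))
      (fun i _ j _ h => by simp only [g, Fin.ext_iff] at h ⊢; omega)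

end twoThreeGraph

theorem stmt_2_general (n : ℕ) :
    ∃ (m : ℕ) (G : SimpleGraph (Fin m)), G.Connected ∧
      G.vv + n ≤ G.maxSpanningTreeLeaves := by
  set M := n + 5
  refine ⟨3 * M + 1, twoThreeGraph (3 * M + 1), ?_, ?_⟩
  · exact twoThreeGraph.caterpillar_isTree.connected.mono twoThreeGraph.caterpillar_le
  · have hvv : (twoThreeGraph (3 * M + 1)).vv ≤ (3 * M + 1) / 3 + 5 :=
      vv_le fun _ _ => twoThreeGraph.card_le_of_isXVisSet
    have hleaves := (twoThreeGraph.two_mul_le_card_leaves_caterpillar (M := M)).trans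
      (leaves_le_maxSpanningTreeLeaves twoThreeGraph.caterpillar_le
        twoThreeGraph.caterpillar_isTree)
    omega

/-- For every positive integer n there is a finite connected graph G with
ℓ(G) − vv(G) ≥ n. -/
theorem stmt_2 (n : ℕ) (hn : 0 < n) :
    ∃ (m : ℕ) (G : SimpleGraph (Fin m)), G.Connected ∧
      G.vv + n ≤ G.maxSpanningTreeLeaves :=
  stmt_2_general n
end

section
/- If G is a finite connected simple graph with n(G) ≥ 2, then μ(G) − 1 ≤ vv(G). -/
open SimpleGraph

variable {V : Type*}

/-- S is a mutual-visibility set of G. -/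
def SimpleGraph.IsMutualVisSet (G : SimpleGraph V) (S : Finset V) : Prop :=
  ∀ u ∈ S, ∀ v ∈ S, ∃ p : G.Walk u v, G.IsShortestPath p ∧
    ∀ z ∈ p.support, z ∈ S → z = u ∨ z = v

/-- The mutual-visibility number μ(G). -/
noncomputable def SimpleGraph.mutualVisNum (G : SimpleGraph V) : ℕ :=
  sSup {n | ∃ S : Finset V, G.IsMutualVisSet S ∧ S.card = n}

/-- μ(G) − 1 ≤ vv(G) for connected G with n(G) ≥ 2. -/
theorem stmt_3 [Fintype V] (G : SimpleGraph V)
    (hconn : G.Connected) (hn : 2 ≤ Fintype.card V) :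
    G.mutualVisNum - 1 ≤ G.vv := by
  classical
  set M := {n | ∃ S : Finset V, G.IsMutualVisSet S ∧ S.card = n} with hM
  have hbdd : BddAbove M := ⟨Fintype.card V, by
    rintro n ⟨S, _, rfl⟩; exact S.card_le_univ⟩
  have hne : M.Nonempty := ⟨0, ∅, by simp [SimpleGraph.IsMutualVisSet], rfl⟩
  have hmem : G.mutualVisNum ∈ M := Nat.sSup_mem hne hbdd
  obtain ⟨S, hS, hcard⟩ := hmem
  rcases Nat.eq_zero_or_pos G.mutualVisNum with h0 | hpos
  · simp [h0]
  · have hSne : S.Nonempty := Finset.card_pos.mp (hcard ▸ hpos)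
    obtain ⟨x, hx⟩ := hSne
    have hvis : G.IsXVisSet x (S.erase x) := by
      refine ⟨Finset.notMem_erase x S, fun y hy => ?_⟩
      have hyS : y ∈ S := Finset.mem_of_mem_erase hy
      obtain ⟨p, hp, hpS⟩ := hS x hx y hyS
      refine ⟨p, hp, fun z hz hzE => ?_⟩
      rcases hpS z hz (Finset.mem_of_mem_erase hzE) with rfl | rfl
      · exact absurd hzE (Finset.notMem_erase z S)
      · rfl
    have h1 : G.mutualVisNum - 1 ≤ G.vx x := by
      refine le_csSup ⟨Fintype.card V, by rintro n ⟨T, _, rfl⟩; exact T.card_le_univ⟩ ?_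
      exact ⟨S.erase x, hvis, by rw [Finset.card_erase_of_mem hx, hcard]⟩
    exact h1.trans (Finset.le_sup (Finset.mem_univ x))
end

section
/- If G is a finite connected simple graph with n(G) ≥ 2, then vv(G) = n(G) − 1 if and only if G has a universal vertex. -/
open SimpleGraph

variable {V : Type*}

lemma visSet_card_le [Fintype V] {G : SimpleGraph V} {x : V} {S : Finset V}
    (h : G.IsXVisSet x S) : S.card ≤ Fintype.card V - 1 := by
  classical
  have hsub : S ⊆ Finset.univ.erase x := by
    intro z hz
    exact Finset.mem_erase.mpr ⟨fun he => h.1 (he ▸ hz), Finset.mem_univ z⟩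
  have := Finset.card_le_card hsub
  simpa [Finset.card_erase_of_mem, Finset.card_univ] using this

lemma vx_set_nonempty (G : SimpleGraph V) (x : V) :
    {n | ∃ S : Finset V, G.IsXVisSet x S ∧ S.card = n}.Nonempty :=
  ⟨0, ∅, ⟨Finset.notMem_empty x, fun y hy => absurd hy (Finset.notMem_empty y)⟩, rfl⟩

lemma vx_le [Fintype V] (G : SimpleGraph V) (x : V) :
    G.vx x ≤ Fintype.card V - 1 := by
  apply csSup_le (vx_set_nonempty G x)
  rintro n ⟨S, hS, rfl⟩
  exact visSet_card_le hS

/-- vv(G) = n(G) − 1 iff G has a universal vertex. -/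
theorem stmt_5 [Fintype V] (G : SimpleGraph V)
    (hconn : G.Connected) (hn : 2 ≤ Fintype.card V) :
    G.vv = Fintype.card V - 1 ↔ ∃ x : V, ∀ y : V, y ≠ x → G.Adj x y := by
  classical
  constructor
  · intro hvv
    have hne : (Finset.univ : Finset V).Nonempty := by
      rw [Finset.univ_nonempty_iff]
      have : 0 < Fintype.card V := by omega
      exact Fintype.card_pos_iff.mp this
    obtain ⟨x, -, hx⟩ := Finset.exists_mem_eq_sup Finset.univ hne (fun x => G.vx x)
    rw [SimpleGraph.vv] at hvv
    rw [hvv] at hx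
    -- hx : card V - 1 = G.vx x
    have hbdd : BddAbove {n | ∃ S : Finset V, G.IsXVisSet x S ∧ S.card = n} := by
      refine ⟨Fintype.card V - 1, ?_⟩
      rintro n ⟨S, hS, rfl⟩
      exact visSet_card_le hS
    have hmem := Nat.sSup_mem (vx_set_nonempty G x) hbdd
    rw [show sSup {n | ∃ S : Finset V, G.IsXVisSet x S ∧ S.card = n} = G.vx x from rfl,
      ← hx] at hmem
    obtain ⟨S, hS, hcard⟩ := hmem
    have hSeq : S = Finset.univ.erase x := by
      apply Finset.eq_of_subset_of_card_le
      · intro z hz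
        exact Finset.mem_erase.mpr ⟨fun he => hS.1 (he ▸ hz), Finset.mem_univ z⟩
      · rw [Finset.card_erase_of_mem (Finset.mem_univ x), Finset.card_univ, hcard]
    refine ⟨x, fun y hy => ?_⟩
    have hyS : y ∈ S := by
      rw [hSeq]; exact Finset.mem_erase.mpr ⟨hy, Finset.mem_univ y⟩
    obtain ⟨p, hp, hmeet⟩ := hS.2 y hyS
    cases p with
    | nil => exact absurd rfl hy.symm
    | cons h q =>
      rename_i z
      by_cases hzy : z = y
      · subst hzy; exact h
      · exfalso
        have hzsup : z ∈ (SimpleGraph.Walk.cons h q).support := by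
          simp [SimpleGraph.Walk.support_cons]
        have hzx : z ≠ x := by
          intro he
          subst he
          have := hp.1
          rw [SimpleGraph.Walk.cons_isPath_iff] at this
          exact this.2 q.start_mem_support
        have hzS : z ∈ S := by
          rw [hSeq]; exact Finset.mem_erase.mpr ⟨hzx, Finset.mem_univ z⟩
        exact hzy (hmeet z hzsup hzS)
  · rintro ⟨x, hx⟩
    have hvx : G.vx x = Fintype.card V - 1 := by
      apply le_antisymm (vx_le G x)
      apply le_csSup
      · refine ⟨Fintype.card V - 1, ?_⟩
        rintro n ⟨S, hS, rfl⟩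
        exact visSet_card_le hS
      · refine ⟨Finset.univ.erase x, ⟨Finset.notMem_erase x _, ?_⟩, ?_⟩
        · intro y hy
          have hyx : y ≠ x := (Finset.mem_erase.mp hy).1
          have hadj : G.Adj x y := hx y hyx
          refine ⟨SimpleGraph.Walk.cons hadj SimpleGraph.Walk.nil, ⟨?_, ?_⟩, ?_⟩
          · simp [SimpleGraph.Walk.cons_isPath_iff, hyx.symm]
          · simp [(SimpleGraph.dist_eq_one_iff_adj).mpr hadj]
          · intro z hz hzS
            simp [SimpleGraph.Walk.support_cons, SimpleGraph.Walk.support_nil] at hz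
            rcases hz with rfl | rfl
            · exact absurd hzS (Finset.notMem_erase z _)
            · rfl
        · rw [Finset.card_erase_of_mem (Finset.mem_univ x), Finset.card_univ]
    rw [SimpleGraph.vv]
    apply le_antisymm
    · exact Finset.sup_le fun y _ => vx_le G y
    · rw [← hvx]
      exact Finset.le_sup (Finset.mem_univ x)
end

section
/- If G is a finite connected simple graph with no universal vertex, then vv(G) ≤ ⌊(n(G)·Δ(G) − 1)/(Δ(G) + 1)⌋. -/
open SimpleGraph

variable {V : Type*}

lemma key_vis_bound [Fintype V] (G : SimpleGraph V) [DecidableRel G.Adj]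
    (hconn : G.Connected) (huniv : ¬ ∃ x : V, ∀ y : V, y ≠ x → G.Adj x y)
    (x : V) (S : Finset V) (hS : G.IsXVisSet x S) :
    S.card * (G.maxDegree + 1) < Fintype.card V * G.maxDegree := by
  classical
  set Δ := G.maxDegree with hΔdef
  -- card V ≥ 2
  have h2 : 1 < Fintype.card V := by
    by_contra h
    push_neg at h
    have hsub : Subsingleton V := Fintype.card_le_one_iff_subsingleton.mp h
    exact huniv ⟨x, fun y hy => absurd (Subsingleton.elim y x) hy⟩
  -- Δ ≥ 1
  have hΔ1 : 1 ≤ Δ := by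
    obtain ⟨y, hyx⟩ := Fintype.exists_ne_of_one_lt_card h2 x
    obtain ⟨w⟩ := hconn.preconnected x y
    have hnn : ¬ w.Nil := Walk.not_nil_of_ne (Ne.symm hyx)
    obtain ⟨u, hadj, q, rfl⟩ := Walk.not_nil_iff.mp hnn
    have hdeg : 0 < G.degree x := (G.degree_pos_iff_exists_adj x).mpr ⟨u, hadj⟩
    exact le_trans hdeg (G.degree_le_maxDegree x)
  set T : Finset V := Sᶜ with hTdef
  have hxT : x ∈ T := Finset.mem_compl.mpr hS.1
  -- every y ∈ S has a neighbor in T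
  have hA : ∀ y ∈ S, ∃ u ∈ T, G.Adj u y := by
    intro y hy
    obtain ⟨p, _, hmeet⟩ := hS.2 y hy
    have hxy : x ≠ y := fun h => hS.1 (h ▸ hy)
    have hnn : ¬ p.reverse.Nil := Walk.not_nil_of_ne (Ne.symm hxy)
    obtain ⟨u, hadj, q, hq⟩ := Walk.not_nil_iff.mp hnn
    have husup : u ∈ p.support := by
      have : u ∈ p.reverse.support := by
        rw [hq]; simp [Walk.support_cons, q.start_mem_support]
      rwa [Walk.support_reverse, List.mem_reverse] at this
    have huT : u ∈ T := by
      rw [Finset.mem_compl]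
      intro huS
      exact G.irrefl ((hmeet u husup huS) ▸ hadj)
    exact ⟨u, huT, hadj.symm⟩
  -- counting
  have hsub : S ⊆ T.biUnion (fun t => G.neighborFinset t ∩ S) := by
    intro y hy
    obtain ⟨u, huT, hadj⟩ := hA y hy
    exact Finset.mem_biUnion.mpr ⟨u, huT,
      Finset.mem_inter.mpr ⟨(G.mem_neighborFinset u y).mpr hadj, hy⟩⟩
  have hbound : ∀ t ∈ T, (G.neighborFinset t ∩ S).card ≤ Δ := by
    intro t _
    calc (G.neighborFinset t ∩ S).card ≤ (G.neighborFinset t).card :=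
          Finset.card_le_card Finset.inter_subset_left
      _ = G.degree t := (G.card_neighborFinset_eq_degree t)
      _ ≤ Δ := G.degree_le_maxDegree t
  have hcount : S.card ≤ T.card * Δ := by
    calc S.card ≤ (T.biUnion (fun t => G.neighborFinset t ∩ S)).card :=
          Finset.card_le_card hsub
      _ ≤ ∑ t ∈ T, (G.neighborFinset t ∩ S).card := Finset.card_biUnion_le
      _ ≤ T.card * Δ := by
          calc ∑ t ∈ T, (G.neighborFinset t ∩ S).card ≤ ∑ _t ∈ T, Δ :=
                Finset.sum_le_sum hbound
            _ = T.card * Δ := by rw [Finset.sum_const, smul_eq_mul]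
  by_contra hlt
  push_neg at hlt
  have hn : S.card + T.card = Fintype.card V := S.card_add_card_compl
  -- equality case: T.card * Δ ≤ S.card
  have hTS : T.card * Δ ≤ S.card := by nlinarith [hlt, hn]
  have heq : S.card = T.card * Δ := le_antisymm hcount hTS
  -- every t ∈ T has exactly Δ neighbors, all in S
  have hall : ∀ t ∈ T, (G.neighborFinset t ∩ S).card = Δ := by
    by_contra hne
    push_neg at hne
    obtain ⟨t₀, ht₀T, ht₀⟩ := hne
    have hlt' : ∑ t ∈ T, (G.neighborFinset t ∩ S).card < ∑ _t ∈ T, Δ :=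
      Finset.sum_lt_sum hbound ⟨t₀, ht₀T, lt_of_le_of_ne (hbound t₀ ht₀T) ht₀⟩
    rw [Finset.sum_const, smul_eq_mul] at hlt'
    have : S.card < T.card * Δ := by
      calc S.card ≤ (T.biUnion (fun t => G.neighborFinset t ∩ S)).card :=
            Finset.card_le_card hsub
        _ ≤ ∑ t ∈ T, (G.neighborFinset t ∩ S).card := Finset.card_biUnion_le
        _ < T.card * Δ := hlt'
    omega
  have hfx := hall x hxT
  -- N(x) ⊆ S
  have hNx : G.neighborFinset x ∩ S = G.neighborFinset x := by
    apply Finset.eq_of_subset_of_card_le Finset.inter_subset_left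
    rw [hfx, G.card_neighborFinset_eq_degree]
    exact G.degree_le_maxDegree x
  have hNxS : G.neighborFinset x ⊆ S := Finset.inter_eq_left.mp hNx
  -- S ⊆ N(x)
  have hSNx : S ⊆ G.neighborFinset x := by
    intro y hy
    obtain ⟨p, _, hmeet⟩ := hS.2 y hy
    have hxy : x ≠ y := fun h => hS.1 (h ▸ hy)
    have hnn : ¬ p.Nil := Walk.not_nil_of_ne hxy
    obtain ⟨u, hadj, q, hq⟩ := Walk.not_nil_iff.mp hnn
    have husup : u ∈ p.support := by
      rw [hq]; simp [Walk.support_cons, q.start_mem_support]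
    have huS : u ∈ S := hNxS ((G.mem_neighborFinset x u).mpr hadj)
    have huy : u = y := hmeet u husup huS
    exact (G.mem_neighborFinset x y).mpr (huy ▸ hadj)
  have hSeq : S = G.neighborFinset x := Finset.Subset.antisymm hSNx hNxS
  have hScard : S.card = Δ := by
    rw [hSeq] at hfx ⊢
    rw [Finset.inter_self] at hfx
    exact hfx
  have hT1 : T.card = 1 := by
    have : T.card * Δ = 1 * Δ := by rw [one_mul, ← heq, hScard]
    exact Nat.eq_of_mul_eq_mul_right (by omega) this
  obtain ⟨a, ha⟩ := Finset.card_eq_one.mp hT1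
  have hax : a = x := by
    have := hxT
    rw [ha, Finset.mem_singleton] at this
    exact this.symm
  apply huniv
  refine ⟨x, fun y hyx => ?_⟩
  have hyS : y ∈ S := by
    by_contra hyS
    have : y ∈ T := Finset.mem_compl.mpr hyS
    rw [ha, hax, Finset.mem_singleton] at this
    exact hyx this
  exact (G.mem_neighborFinset x y).mp (hSeq ▸ hyS)

/-- If connected G has no universal vertex, then
vv(G) ≤ ⌊(n(G)·Δ(G) − 1)/(Δ(G) + 1)⌋. -/
theorem stmt_10 [Fintype V] (G : SimpleGraph V) [DecidableRel G.Adj]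
    (hconn : G.Connected) (huniv : ¬ ∃ x : V, ∀ y : V, y ≠ x → G.Adj x y) :
    G.vv ≤ (Fintype.card V * G.maxDegree - 1) / (G.maxDegree + 1) := by
  apply Finset.sup_le
  intro x _
  apply csSup_le
  · exact ⟨0, ∅, ⟨Finset.notMem_empty x, fun y hy => absurd hy (Finset.notMem_empty y)⟩,
      Finset.card_empty⟩
  · rintro n ⟨S, hSvis, rfl⟩
    have hkey := key_vis_bound G hconn huniv x S hSvis
    rw [Nat.le_div_iff_mul_le (Nat.succ_pos _)]
    exact Nat.le_sub_one_of_lt hkey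
end

section
/- If G and H are finite connected simple graphs, each with at least 2 vertices, with n(G) ≥ n(H), then vv(G □ H) ≤ (n(G) − 1)·n(H), where □ denotes the Cartesian product of graphs. -/
open SimpleGraph

variable {V : Type*}

/-- Key lemma: any `x`-visibility set in `G □ H` misses at least `|W|` vertices. -/
lemma aux_card_le {W : Type*} [Fintype V] [Fintype W] [DecidableEq V] [DecidableEq W]
    (G : SimpleGraph V) (H : SimpleGraph W)
    (hVW : Fintype.card W ≤ Fintype.card V)
    (x : V × W) (S : Finset (V × W)) (hS : (G.boxProd H).IsXVisSet x S) :
    S.card ≤ (Fintype.card V - 1) * Fintype.card W := by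
  obtain ⟨hx, hvis⟩ := hS
  suffices h : Fintype.card W ≤ Sᶜ.card by
    have h1 : Sᶜ.card = Fintype.card (V × W) - S.card := Finset.card_compl S
    have h2 : S.card ≤ Fintype.card (V × W) := Finset.card_le_univ S
    have h3 : Fintype.card (V × W) = Fintype.card V * Fintype.card W := Fintype.card_prod V W
    have h4 : (Fintype.card V - 1) * Fintype.card W
        = Fintype.card V * Fintype.card W - Fintype.card W := by
      rw [Nat.sub_one_mul]
    omega
  by_cases hcase : ∀ w : W, ∃ g : V, (g, w) ∉ S
  · -- every layer misses a vertex of S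
    choose f hf using hcase
    calc Fintype.card W = (Finset.univ : Finset W).card := (Finset.card_univ).symm
      _ ≤ Sᶜ.card := Finset.card_le_card_of_injOn (fun w => (f w, w))
          (fun w _ => Finset.mem_compl.mpr (hf w))
          (fun a _ b _ hab => congrArg Prod.snd hab)
  · -- some layer is fully inside S
    push_neg at hcase
    obtain ⟨w₀, hw₀⟩ := hcase
    refine le_trans hVW ?_
    have hex : ∀ g' : V, ∃ z : V × W, z ∉ S ∧ z.1 = g' := by
      intro g'
      obtain ⟨p, _, hmeet⟩ := hvis (g', w₀) (hw₀ g')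
      have hxy : x ≠ (g', w₀) := fun h => hx (h ▸ hw₀ g')
      have hq : ¬ p.reverse.Nil := SimpleGraph.Walk.not_nil_of_ne (fun h => hxy h.symm)
      set z := p.reverse.getVert 1 with hz
      have hadj : (G.boxProd H).Adj (g', w₀) z := p.reverse.adj_snd hq
      have hzsup : z ∈ p.support := by
        have : z ∈ p.reverse.support := by
          rw [SimpleGraph.Walk.mem_support_iff_exists_getVert]
          refine ⟨1, rfl, ?_⟩
          have := (SimpleGraph.Walk.not_nil_iff_lt_length.mp hq)
          omega
        rwa [SimpleGraph.Walk.support_reverse, List.mem_reverse] at this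
      have hzy : z ≠ (g', w₀) := hadj.ne'
      have hznS : z ∉ S := fun h => hzy (hmeet z hzsup h)
      refine ⟨z, hznS, ?_⟩
      rcases SimpleGraph.boxProd_adj.mp hadj with ⟨_, h2⟩ | ⟨_, h1⟩
      · have hzeq : z = (z.1, w₀) := Prod.ext rfl h2.symm
        exact absurd (hzeq ▸ hw₀ z.1) hznS
      · exact h1.symm
    choose φ h1 h2 using hex
    calc Fintype.card V = (Finset.univ : Finset V).card := (Finset.card_univ).symm
      _ ≤ Sᶜ.card := Finset.card_le_card_of_injOn φ
          (fun g _ => Finset.mem_compl.mpr (h1 g))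
          (fun a _ b _ hab => by rw [← h2 a, ← h2 b, hab])

/-- If n(G) ≥ n(H), then vv(G □ H) ≤ (n(G) − 1)·n(H). -/
theorem stmt_14 {W : Type*} [Fintype V] [Fintype W]
    (G : SimpleGraph V) (H : SimpleGraph W)
    (hG : G.Connected) (hH : H.Connected)
    (hV : 2 ≤ Fintype.card V) (hW : 2 ≤ Fintype.card W)
    (hVW : Fintype.card W ≤ Fintype.card V) :
    (G.boxProd H).vv ≤ (Fintype.card V - 1) * Fintype.card W := by
  classical
  apply Finset.sup_le
  intro x _
  apply csSup_le'
  rintro n ⟨S, hS, rfl⟩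
  exact aux_card_le G H hVW x S hS
end
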